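/- For any nonnegative n×n matrix A and any index i, the max-algebra local spectral radius equals the limit of the t-th roots of the classical local spectral radii of the Hadamard powers: r_{e_i}(A) = lim_{t→∞} ρ_{e_i}(A^{(t)})^{1/t}. -/
import Mathlib


open Filter Finset

noncomputable section

/-- Max-algebra product of matrices: `(A ⊗ B) i j = max_l A i l * B l j`. -/
def maxMul {n : ℕ} (A B : Matrix (Fin n) (Fin n) ℝ) : Matrix (Fin n) (Fin n) ℝ :=
  fun i j => ⨆ l, A i l * B l j

/-- Max-algebra powers `A^k_⊗`. -/
def maxPow {n : ℕ} (A : Matrix (Fin n) (Fin n) ℝ) : ℕ → Matrix (Fin n) (Fin n) ℝ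
  | 0 => fun i j => if i = j then 1 else 0
  | k + 1 => maxMul (maxPow A k) A

/-- Max-algebra action of a matrix on a vector: `(A ⊗ x) i = max_j A i j * x j`. -/
def maxVecMul {n : ℕ} (A : Matrix (Fin n) (Fin n) ℝ) (x : Fin n → ℝ) : Fin n → ℝ :=
  fun i => ⨆ j, A i j * x j

/-- Max norm of a vector: `‖x‖ = max_i x i`. -/
def vnorm {n : ℕ} (x : Fin n → ℝ) : ℝ := ⨆ i, x i

/-- Max entry norm of a matrix: `‖A‖ = max_{i,j} A i j`. -/
def matNorm {n : ℕ} (A : Matrix (Fin n) (Fin n) ℝ) : ℝ := ⨆ i, ⨆ j, A i j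

/-- Max-algebra local spectral radius `r_x(A) = lim_k ‖A^k_⊗ ⊗ x‖^{1/k}`
(the limit exists, so we may define it as the `limsup`). -/
def rloc {n : ℕ} (A : Matrix (Fin n) (Fin n) ℝ) (x : Fin n → ℝ) : ℝ :=
  Filter.atTop.limsup fun k : ℕ => (vnorm (maxVecMul (maxPow A k) x)) ^ ((k : ℝ)⁻¹)

/-- Classical local spectral radius `ρ_x(A) = limsup_k ‖A^k x‖^{1/k}`. -/
def rhox {n : ℕ} (A : Matrix (Fin n) (Fin n) ℝ) (x : Fin n → ℝ) : ℝ :=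
  Filter.atTop.limsup fun k : ℕ => (vnorm ((A ^ k).mulVec x)) ^ ((k : ℝ)⁻¹)

/-- Hadamard (entrywise) power `A^{(t)} = [a_{ij}^t]`. -/
def hadPow {n : ℕ} (A : Matrix (Fin n) (Fin n) ℝ) (t : ℝ) : Matrix (Fin n) (Fin n) ℝ :=
  fun i j => (A i j) ^ t

/-- The `i`-th standard basis vector. -/
def e {n : ℕ} (i : Fin n) : Fin n → ℝ := fun j => if j = i then 1 else 0

end

section Aux

variable {n : ℕ}

lemma le_fsup (f : Fin n → ℝ) (j : Fin n) : f j ≤ ⨆ i, f i :=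
  le_ciSup ((Set.finite_range f).bddAbove) j

lemma fsup_le [Nonempty (Fin n)] {f : Fin n → ℝ} {c : ℝ} (h : ∀ j, f j ≤ c) :
    (⨆ i, f i) ≤ c := ciSup_le h

lemma exists_fsup [Nonempty (Fin n)] (f : Fin n → ℝ) : ∃ j, (⨆ i, f i) = f j := by
  obtain ⟨j, hj⟩ := Finite.exists_max f
  exact ⟨j, le_antisymm (fsup_le hj) (le_fsup f j)⟩

lemma fsup_nonneg [Nonempty (Fin n)] {f : Fin n → ℝ} (h : ∀ j, 0 ≤ f j) :
    0 ≤ ⨆ i, f i := le_trans (h (Classical.arbitrary _)) (le_fsup f _)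

lemma maxPow_nonneg [Nonempty (Fin n)] {A : Matrix (Fin n) (Fin n) ℝ}
    (hA : ∀ i j, 0 ≤ A i j) (k : ℕ) : ∀ p q, 0 ≤ maxPow A k p q := by
  induction k with
  | zero => intro p q; dsimp [maxPow]; positivity
  | succ k ih =>
      intro p q
      exact fsup_nonneg fun l => mul_nonneg (ih p l) (hA l q)

lemma matpow_nonneg {B : Matrix (Fin n) (Fin n) ℝ} (hB : ∀ p q, 0 ≤ B p q) (k : ℕ) :
    ∀ p q, 0 ≤ (B ^ k) p q := by
  induction k with
  | zero =>
      intro p q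
      rw [pow_zero]
      by_cases h : p = q <;> simp [Matrix.one_apply, h]
  | succ k ih =>
      intro p q
      rw [pow_succ, Matrix.mul_apply]
      exact Finset.sum_nonneg fun l _ => mul_nonneg (ih p l) (hB l q)

lemma hadPow_nonneg {A : Matrix (Fin n) (Fin n) ℝ} (hA : ∀ i j, 0 ≤ A i j) (t : ℝ) :
    ∀ p q, 0 ≤ hadPow A t p q := fun p q => Real.rpow_nonneg (hA p q) t

/-- Key entrywise comparison between Hadamard-power matrix powers and max-algebra powers. -/
lemma key [Nonempty (Fin n)] {A : Matrix (Fin n) (Fin n) ℝ} (hA : ∀ i j, 0 ≤ A i j)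
    {t : ℝ} (ht : 1 ≤ t) (k : ℕ) (p q : Fin n) :
    (maxPow A k p q) ^ t ≤ ((hadPow A t) ^ k) p q ∧
      ((hadPow A t) ^ k) p q ≤ (n : ℝ) ^ k * (maxPow A k p q) ^ t := by
  have ht0 : (0:ℝ) < t := lt_of_lt_of_le one_pos ht
  induction k generalizing p q with
  | zero =>
      rw [pow_zero, pow_zero, one_mul]
      dsimp [maxPow]
      by_cases h : p = q <;>
        simp [Matrix.one_apply, h, Real.one_rpow, Real.zero_rpow ht0.ne']
  | succ k ih =>
      have hBk : ∀ p q, 0 ≤ ((hadPow A t) ^ k) p q := matpow_nonneg (hadPow_nonneg hA t) k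
      have hMk : ∀ p q, 0 ≤ maxPow A k p q := maxPow_nonneg hA k
      have hMk1 : ∀ p q, 0 ≤ maxPow A (k+1) p q := maxPow_nonneg hA (k+1)
      have hentry : ((hadPow A t) ^ (k+1)) p q
          = ∑ l, ((hadPow A t) ^ k) p l * (A l q) ^ t := by
        rw [pow_succ, Matrix.mul_apply]; rfl
      have hmax : maxPow A (k+1) p q = ⨆ l, maxPow A k p l * A l q := rfl
      constructor
      · obtain ⟨l₀, hl₀⟩ := exists_fsup (fun l => maxPow A k p l * A l q)
        rw [hentry, hmax, hl₀, Real.mul_rpow (hMk p l₀) (hA l₀ q)]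
        calc (maxPow A k p l₀) ^ t * (A l₀ q) ^ t
            ≤ ((hadPow A t) ^ k) p l₀ * (A l₀ q) ^ t := by
              exact mul_le_mul_of_nonneg_right (ih p l₀).1 (Real.rpow_nonneg (hA l₀ q) t)
          _ ≤ ∑ l, ((hadPow A t) ^ k) p l * (A l q) ^ t := by
              refine Finset.single_le_sum (f := fun l => ((hadPow A t) ^ k) p l * (A l q) ^ t)
                (fun l _ => mul_nonneg (hBk p l) (Real.rpow_nonneg (hA l q) t))
                (Finset.mem_univ l₀)
      · rw [hentry]
        have hterm : ∀ l, ((hadPow A t) ^ k) p l * (A l q) ^ t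
            ≤ (n : ℝ) ^ k * (maxPow A (k+1) p q) ^ t := by
          intro l
          calc ((hadPow A t) ^ k) p l * (A l q) ^ t
              ≤ ((n : ℝ) ^ k * (maxPow A k p l) ^ t) * (A l q) ^ t :=
                mul_le_mul_of_nonneg_right (ih p l).2 (Real.rpow_nonneg (hA l q) t)
            _ = (n : ℝ) ^ k * ((maxPow A k p l) ^ t * (A l q) ^ t) := by ring
            _ = (n : ℝ) ^ k * (maxPow A k p l * A l q) ^ t := by
                rw [Real.mul_rpow (hMk p l) (hA l q)]
            _ ≤ (n : ℝ) ^ k * (maxPow A (k+1) p q) ^ t := by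
                refine mul_le_mul_of_nonneg_left ?_ (by positivity)
                refine Real.rpow_le_rpow (mul_nonneg (hMk p l) (hA l q)) ?_ ht0.le
                rw [hmax]; exact le_fsup (fun l => maxPow A k p l * A l q) l
        calc ∑ l, ((hadPow A t) ^ k) p l * (A l q) ^ t
            ≤ ∑ _l : Fin n, (n : ℝ) ^ k * (maxPow A (k+1) p q) ^ t :=
              Finset.sum_le_sum fun l _ => hterm l
          _ = (n : ℝ) ^ (k+1) * (maxPow A (k+1) p q) ^ t := by
              rw [Finset.sum_const, Finset.card_univ, Fintype.card_fin, nsmul_eq_mul]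
              ring
      
lemma mulVec_e (B : Matrix (Fin n) (Fin n) ℝ) (i j : Fin n) :
    B.mulVec (e i) j = B j i := by
  simp [Matrix.mulVec, dotProduct, e, mul_ite]

lemma maxVecMul_e [Nonempty (Fin n)] {B : Matrix (Fin n) (Fin n) ℝ}
    (hB : ∀ p q, 0 ≤ B p q) (i j : Fin n) :
    maxVecMul B (e i) j = B j i := by
  refine le_antisymm (fsup_le fun l => ?_) ?_
  · by_cases h : l = i <;> simp [e, h, hB j i]
  · show B j i ≤ ⨆ l, B j l * e i l
    have h := le_fsup (fun l => B j l * e i l) i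
    rw [show e i i = 1 by simp [e], mul_one] at h
    exact h

end Aux

/-- `r_{e_i}(A) = lim_{t→∞} ρ_{e_i}(A^{(t)})^{1/t}`. -/
theorem stmt2 {n : ℕ} (A : Matrix (Fin n) (Fin n) ℝ) (hA : ∀ i j, 0 ≤ A i j)
    (i : Fin n) :
    Filter.Tendsto (fun t : ℝ => (rhox (hadPow A t) (e i)) ^ t⁻¹)
      Filter.atTop (nhds (rloc A (e i))) := by
  obtain _ | m := n
  · exact i.elim0
  -- basic setup
  set M : ℕ → ℝ := fun k => ⨆ j, maxPow A k j i with hM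
  set a : ℕ → ℝ := fun k => (M k) ^ ((k : ℝ))⁻¹ with ha
  have hMnn : ∀ k, 0 ≤ M k := fun k => fsup_nonneg fun j => maxPow_nonneg hA k j i
  have hann : ∀ k, 0 ≤ a k := fun k => Real.rpow_nonneg (hMnn k) _
  have hrloc : rloc A (e i) = atTop.limsup a := by
    have hfe : (fun k : ℕ => (vnorm (maxVecMul (maxPow A k) (e i))) ^ ((k : ℝ))⁻¹) = a := by
      funext k
      have h1 : vnorm (maxVecMul (maxPow A k) (e i)) = M k := by
        unfold vnorm
        exact iSup_congr fun j => maxVecMul_e (maxPow_nonneg hA k) i j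
      rw [ha, h1]
    rw [rloc, hfe]
  set r : ℝ := rloc A (e i) with hr
  -- bound on entries
  set C : ℝ := max (matNorm A) 1 with hC
  have hC1 : (1 : ℝ) ≤ C := le_max_right _ _
  have hC0 : (0 : ℝ) ≤ C := le_trans zero_le_one hC1
  have hAC : ∀ p q, A p q ≤ C := fun p q =>
    le_trans (le_trans (le_fsup (fun q' => A p q') q)
      (le_fsup (fun p' => ⨆ q', A p' q') p)) (le_max_left _ _)
  have hMPC : ∀ k, ∀ p q, maxPow A k p q ≤ C ^ k := by
    intro k
    induction k with
    | zero =>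
        intro p q
        dsimp [maxPow]
        by_cases h : p = q <;> simp [h, hC1]
    | succ k ih =>
        intro p q
        refine fsup_le fun l => ?_
        calc maxPow A k p l * A l q ≤ C ^ k * C :=
              mul_le_mul (ih p l) (hAC l q) (hA l q) (pow_nonneg hC0 k)
          _ = C ^ (k + 1) := (pow_succ C k).symm
  have hMC : ∀ k, M k ≤ C ^ k := fun k => fsup_le fun j => hMPC k j i
  have hroot : ∀ (c : ℝ), 0 ≤ c → ∀ k : ℕ, k ≠ 0 → ((c ^ k : ℝ)) ^ ((k : ℝ))⁻¹ = c := by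
    intro c hc k hk
    rw [← Real.rpow_natCast c k, ← Real.rpow_mul hc,
      mul_inv_cancel₀ (Nat.cast_ne_zero.2 hk), Real.rpow_one]
  have haC : ∀ k, a k ≤ C := by
    intro k
    rcases eq_or_ne k 0 with hk | hk
    · subst hk; simpa [ha] using hC1
    · calc a k ≤ (C ^ k) ^ ((k : ℝ))⁻¹ :=
            Real.rpow_le_rpow (hMnn k) (hMC k) (by positivity)
        _ = C := hroot C hC0 k hk
  have hba : atTop.IsBoundedUnder (· ≤ ·) a :=
    isBoundedUnder_of_eventually_le (Eventually.of_forall haC)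
  have hca : atTop.IsCoboundedUnder (· ≤ ·) a :=
    (isBoundedUnder_of_eventually_ge (Eventually.of_forall hann)).isCoboundedUnder_le
  have hr0 : 0 ≤ r := by
    rw [hrloc]
    exact le_limsup_of_frequently_le (Frequently.of_forall hann) hba
  set N : ℝ := ((m + 1 : ℕ) : ℝ) with hNdef
  have hN1 : (1 : ℝ) ≤ N := by rw [hNdef]; exact_mod_cast Nat.one_le_iff_ne_zero.2 (Nat.succ_ne_zero m)
  have hN0 : (0 : ℝ) < N := lt_of_lt_of_le one_pos hN1
  -- the main estimate for each fixed t ≥ 1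
  have hmain : ∀ t : ℝ, 1 ≤ t →
      r ^ t ≤ rhox (hadPow A t) (e i) ∧ rhox (hadPow A t) (e i) ≤ N * r ^ t := by
    intro t ht
    have ht0 : (0 : ℝ) < t := lt_of_lt_of_le one_pos ht
    set B : Matrix (Fin (m + 1)) (Fin (m + 1)) ℝ := hadPow A t with hB
    set S : ℕ → ℝ := fun k => ⨆ j, (B ^ k) j i with hS
    set b : ℕ → ℝ := fun k => (S k) ^ ((k : ℝ))⁻¹ with hb
    have hBnn : ∀ p q, 0 ≤ B p q := hadPow_nonneg hA t
    have hBknn : ∀ k, ∀ p q, 0 ≤ (B ^ k) p q := fun k => matpow_nonneg hBnn k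
    have hSnn : ∀ k, 0 ≤ S k := fun k => fsup_nonneg fun j => hBknn k j i
    have hbnn : ∀ k, 0 ≤ b k := fun k => Real.rpow_nonneg (hSnn k) _
    have hrhox : rhox B (e i) = atTop.limsup b := by
      have hfe : (fun k : ℕ => (vnorm ((B ^ k).mulVec (e i))) ^ ((k : ℝ))⁻¹) = b := by
        funext k
        have h1 : vnorm ((B ^ k).mulVec (e i)) = S k := by
          unfold vnorm
          exact iSup_congr fun j => mulVec_e (B ^ k) i j
        rw [hb, h1]
      rw [rhox, hfe]
    have hSl : ∀ k, (M k) ^ t ≤ S k := by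
      intro k
      obtain ⟨j₀, hj₀⟩ := exists_fsup (fun j => maxPow A k j i)
      have hM0 : M k = maxPow A k j₀ i := hj₀
      calc M k ^ t = (maxPow A k j₀ i) ^ t := by rw [hM0]
        _ ≤ (B ^ k) j₀ i := (key hA ht k j₀ i).1
        _ ≤ S k := le_fsup (fun j => (B ^ k) j i) j₀
    have hSu : ∀ k, S k ≤ N ^ k * (M k) ^ t := by
      intro k
      refine fsup_le fun j => ?_
      calc (B ^ k) j i ≤ N ^ k * (maxPow A k j i) ^ t := (key hA ht k j i).2
        _ ≤ N ^ k * (M k) ^ t := by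
            refine mul_le_mul_of_nonneg_left ?_ (by positivity)
            exact Real.rpow_le_rpow (maxPow_nonneg hA k j i)
              (le_fsup (fun j => maxPow A k j i) j) ht0.le
    have hswap : ∀ k : ℕ, ((M k) ^ t) ^ ((k : ℝ))⁻¹ = (a k) ^ t := by
      intro k
      rw [ha]
      rw [← Real.rpow_mul (hMnn k), ← Real.rpow_mul (hMnn k), mul_comm]
    have hbl : ∀ k, k ≠ 0 → (a k) ^ t ≤ b k := by
      intro k hk
      rw [← hswap k]
      exact Real.rpow_le_rpow (Real.rpow_nonneg (hMnn k) t) (hSl k) (by positivity)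
    have hbu : ∀ k, k ≠ 0 → b k ≤ N * (a k) ^ t := by
      intro k hk
      calc b k ≤ (N ^ k * (M k) ^ t) ^ ((k : ℝ))⁻¹ :=
            Real.rpow_le_rpow (hSnn k) (hSu k) (by positivity)
        _ = (N ^ k) ^ ((k : ℝ))⁻¹ * ((M k) ^ t) ^ ((k : ℝ))⁻¹ :=
            Real.mul_rpow (by positivity) (Real.rpow_nonneg (hMnn k) t)
        _ = N * (a k) ^ t := by rw [hroot N hN0.le k hk, hswap k]
    -- limsup of a^t equals r^t
    have hlima : atTop.limsup a = r := hrloc.symm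
    have hmono : Monotone (fun x : ℝ => max x 0 ^ t) := fun x y h =>
      Real.rpow_le_rpow (le_max_right _ _) (max_le_max h le_rfl) ht0.le
    have hcont : ContinuousAt (fun x : ℝ => max x 0 ^ t) (atTop.limsup a) := by
      exact (Real.continuousAt_rpow_const _ _ (Or.inr ht0.le)).comp
        ((continuous_id.max continuous_const).continuousAt)
    have hmap := hmono.map_limsup_of_continuousAt a hcont hba hca
    have hat : atTop.limsup (fun k => (a k) ^ t) = r ^ t := by
      have h1 : ((fun x : ℝ => max x 0 ^ t) ∘ a) = fun k => (a k) ^ t :=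
        funext fun k => by simp [Function.comp, max_eq_left (hann k)]
      rw [← h1, ← hmap, hlima, max_eq_left hr0]
    have hbat : atTop.IsBoundedUnder (· ≤ ·) (fun k => (a k) ^ t) :=
      isBoundedUnder_of_eventually_le (Eventually.of_forall fun k =>
        Real.rpow_le_rpow (hann k) (haC k) ht0.le)
    have hcat : atTop.IsCoboundedUnder (· ≤ ·) (fun k => (a k) ^ t) :=
      (isBoundedUnder_of_eventually_ge (Eventually.of_forall fun k =>
        Real.rpow_nonneg (hann k) t)).isCoboundedUnder_le
    have hbb : atTop.IsBoundedUnder (· ≤ ·) b := by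
      refine isBoundedUnder_of_eventually_le (a := max 1 (N * C ^ t)) (Eventually.of_forall ?_)
      intro k
      rcases eq_or_ne k 0 with hk | hk
      · subst hk; simp [hb]
      · refine le_trans (hbu k hk) (le_trans ?_ (le_max_right _ _))
        exact mul_le_mul_of_nonneg_left
          (Real.rpow_le_rpow (hann k) (haC k) ht0.le) hN0.le
    have hcb : atTop.IsCoboundedUnder (· ≤ ·) b :=
      (isBoundedUnder_of_eventually_ge (Eventually.of_forall hbnn)).isCoboundedUnder_le
    constructor
    · rw [hrhox, ← hat]
      exact limsup_le_limsup (eventually_atTop.2 ⟨1, fun k hk => hbl k (by omega)⟩) hcat hbb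
    · rw [hrhox]
      have hmono2 : Monotone (fun x : ℝ => N * x) := fun x y h =>
        mul_le_mul_of_nonneg_left h hN0.le
      have hmap2 := hmono2.map_limsup_of_continuousAt (fun k => (a k) ^ t)
        ((continuous_const.mul continuous_id).continuousAt) hbat hcat
      have h2 : atTop.limsup (fun k => N * (a k) ^ t) = N * r ^ t := by
        have h3 : ((fun x : ℝ => N * x) ∘ fun k => (a k) ^ t) = fun k => N * (a k) ^ t := rfl
        rw [← h3, ← hmap2, hat]
      rw [← h2]
      refine limsup_le_limsup (eventually_atTop.2 ⟨1, fun k hk => hbu k (by omega)⟩) hcb ?_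
      exact isBoundedUnder_of_eventually_le (Eventually.of_forall fun k =>
        mul_le_mul_of_nonneg_left (Real.rpow_le_rpow (hann k) (haC k) ht0.le) hN0.le)
  -- squeeze as t → ∞
  have hup : Tendsto (fun t : ℝ => N ^ t⁻¹ * r) atTop (nhds r) := by
    have h1 : Tendsto (fun t : ℝ => t⁻¹) atTop (nhds 0) := tendsto_inv_atTop_zero
    have h2 : ContinuousAt (fun y : ℝ => N ^ y) 0 :=
      Real.continuousAt_const_rpow hN0.ne'
    have h3 := h2.tendsto.comp h1
    rw [Real.rpow_zero] at h3
    have h4 := h3.mul_const r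
    simpa using h4
  refine tendsto_of_tendsto_of_tendsto_of_le_of_le' tendsto_const_nhds hup ?_ ?_
  · filter_upwards [eventually_ge_atTop (1 : ℝ)] with t ht
    have ht0 : (0 : ℝ) < t := lt_of_lt_of_le one_pos ht
    have h := (hmain t ht).1
    calc r = (r ^ t) ^ t⁻¹ := by
          rw [← Real.rpow_mul hr0, mul_inv_cancel₀ ht0.ne', Real.rpow_one]
      _ ≤ (rhox (hadPow A t) (e i)) ^ t⁻¹ :=
          Real.rpow_le_rpow (Real.rpow_nonneg hr0 t) h (by positivity)
  · filter_upwards [eventually_ge_atTop (1 : ℝ)] with t ht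
    have ht0 : (0 : ℝ) < t := lt_of_lt_of_le one_pos ht
    have h := (hmain t ht).2
    have hρ0 : 0 ≤ rhox (hadPow A t) (e i) :=
      le_trans (Real.rpow_nonneg hr0 t) (hmain t ht).1
    calc (rhox (hadPow A t) (e i)) ^ t⁻¹ ≤ (N * r ^ t) ^ t⁻¹ :=
          Real.rpow_le_rpow hρ0 h (by positivity)
      _ = N ^ t⁻¹ * (r ^ t) ^ t⁻¹ :=
          Real.mul_rpow hN0.le (Real.rpow_nonneg hr0 t)
      _ = N ^ t⁻¹ * r := by
          rw [← Real.rpow_mul hr0, mul_inv_cancel₀ ht0.ne', Real.rpow_one]
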